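/- arXiv:1511.04314 — 3 statements merged into one kernel-verified Lean document; each statement's English description precedes it below -/
import Mathlib

section
/- Let s be an exchange matrix and define the basket-quoted prices s̄_i = 1/∑_j s_{i,j} ∈ [0,1] for each i. Then for all i,j, whenever the fraction s̄_j/s̄_i is well-defined (i.e. not 0/0 or ∞/∞), one has s_{i,j} = s̄_j/s̄_i. -/
open MeasureTheory Filter Set Function
open scoped ENNReal

noncomputable section

/-- The product `x * y` of two elements of `[0,∞]` is defined unless `{x, y} = {0, ∞}`. -/
def DefinedProd (x y : ℝ≥0∞) : Prop := ¬(x = 0 ∧ y = ∞) ∧ ¬(x = ∞ ∧ y = 0)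

/-- An exchange matrix: a `d × d` matrix with entries in `[0,∞]` such that `s i i = 1` and
`s i j * s j k = s i k` whenever the product is defined. -/
structure IsExchangeMatrix {d : ℕ} (s : Fin d → Fin d → ℝ≥0∞) : Prop where
  diag : ∀ i, s i i = 1
  consistent : ∀ i j k, DefinedProd (s i j) (s j k) → s i j * s j k = s i k

/-- A value vector for an exchange matrix `s`: `s i j * v j = v i` whenever defined. -/
def IsValueVector {d : ℕ} (s : Fin d → Fin d → ℝ≥0∞) (v : Fin d → ℝ≥0∞) : Prop :=
  ∀ i j, DefinedProd (s i j) (v j) → s i j * v j = v i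

open Classical in
/-- The set of active indices of an exchange matrix: those whose row sum is finite. -/
def activeFinset {d : ℕ} (s : Fin d → Fin d → ℝ≥0∞) : Finset (Fin d) :=
  Finset.univ.filter fun i => ∑ j, s i j < ∞

/-- The market model of the paper: a right-continuous filtration `F` (with `F 0` trivial) on
`[0,T]`, and a right-continuous adapted process `S` of exchange matrices with deterministic
initial value `S0` all of whose rows are finite (no currency has devalued at time `0`). -/
structure MarketModel (d : ℕ) (Ω : Type*) [mΩ : MeasurableSpace Ω] (T : ℝ) where
  F : Filtration ℝ mΩ
  S : ℝ → Ω → Fin d → Fin d → ℝ≥0∞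
  S0 : Fin d → Fin d → ℝ≥0∞
  T_pos : 0 < T
  rc_F : ∀ t ∈ Set.Ico (0 : ℝ) T, (⨅ u ∈ Set.Ioi t, F u) ≤ F t
  trivial_F0 : ∀ A : Set Ω, MeasurableSet[F 0] A → A = ∅ ∨ A = Set.univ
  adapted_S : ∀ t ∈ Set.Icc (0 : ℝ) T, ∀ i j, Measurable[F t] fun ω => S t ω i j
  rc_S : ∀ ω i j, ∀ t ∈ Set.Ico (0 : ℝ) T,
    Tendsto (fun u => S u ω i j) (nhdsWithin t (Set.Ioi t)) (nhds (S t ω i j))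
  exchange_S : ∀ t ∈ Set.Icc (0 : ℝ) T, ∀ ω, IsExchangeMatrix fun i j => S t ω i j
  init_S : ∀ ω, S 0 ω = S0
  active_S0 : ∀ i, ∑ j, S0 i j < ∞

namespace MarketModel

variable {d : ℕ} {Ω : Type*} [mΩ : MeasurableSpace Ω] {T : ℝ}

/-- Basket-quoted price of the `i`-th currency. -/
def Sbar (M : MarketModel d Ω T) (i : Fin d) (t : ℝ) (ω : Ω) : ℝ≥0∞ :=
  (∑ j, M.S t ω i j)⁻¹

/-- The (random) set of active currencies at time `t`. -/
def active (M : MarketModel d Ω T) (t : ℝ) (ω : Ω) : Finset (Fin d) :=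
  activeFinset fun i j => M.S t ω i j

/-- The payoff of a claim `C` in terms of the basket:
`C̄ = (1/|A(T)|) ∑_{j ∈ A(T)} S̄_j(T) C_j`. -/
def Cbar (M : MarketModel d Ω T) (C : Ω → Fin d → ℝ≥0∞) (ω : Ω) : ℝ≥0∞ :=
  ((M.active T ω).card : ℝ≥0∞)⁻¹ * ∑ j ∈ M.active T ω, M.Sbar j T ω * C ω j

/-- A contingent claim: an `F(T)`-measurable value vector for `S(T)`. -/
def IsClaim (M : MarketModel d Ω T) (C : Ω → Fin d → ℝ≥0∞) : Prop :=
  (∀ i, Measurable fun ω => C ω i) ∧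
  ∀ ω, IsValueVector (fun i j => M.S T ω i j) (C ω)

end MarketModel

/-- A real-valued martingale on the time interval `[0, T]`. -/
def MartingaleOn {Ω : Type*} {mΩ : MeasurableSpace Ω} (F : Filtration ℝ mΩ)
    (Q : Measure Ω) (X : ℝ → Ω → ℝ) (T : ℝ) : Prop :=
  (∀ t ∈ Set.Icc (0 : ℝ) T, StronglyMeasurable[F t] (X t) ∧ Integrable (X t) Q) ∧
  ∀ r ∈ Set.Icc (0 : ℝ) T, ∀ t ∈ Set.Icc (0 : ℝ) T, r ≤ t → Q[X t|F r] =ᵐ[Q] X r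

/-- A real-valued supermartingale on the time interval `[0, T]`. -/
def SupermartingaleOn {Ω : Type*} {mΩ : MeasurableSpace Ω} (F : Filtration ℝ mΩ)
    (Q : Measure Ω) (X : ℝ → Ω → ℝ) (T : ℝ) : Prop :=
  (∀ t ∈ Set.Icc (0 : ℝ) T, StronglyMeasurable[F t] (X t) ∧ Integrable (X t) Q) ∧
  ∀ r ∈ Set.Icc (0 : ℝ) T, ∀ t ∈ Set.Icc (0 : ℝ) T, r ≤ t → Q[X t|F r] ≤ᵐ[Q] X r

/-- A local martingale on `[0, T]`: there is a nondecreasing sequence of stopping times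
with `Q(lim_n τ_n > T) = 1` such that each stopped process is a martingale on `[0, T]`. -/
def LocalMartingaleOn {Ω : Type*} {mΩ : MeasurableSpace Ω} (F : Filtration ℝ mΩ)
    (Q : Measure Ω) (X : ℝ → Ω → ℝ) (T : ℝ) : Prop :=
  ∃ τ : ℕ → Ω → ℝ,
    (∀ n, IsStoppingTime F (fun ω => (τ n ω : WithTop ℝ))) ∧
    (∀ n ω, τ n ω ≤ τ (n + 1) ω) ∧
    (∀ᵐ ω ∂Q, ∃ n, T < τ n ω) ∧
    ∀ n, MartingaleOn F Q (fun t ω => X (min t (τ n ω)) ω) T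

/-- A numéraire-consistent family of probability measures:
`E^{Q_i}[S_{i,j}(t) 1_A] = S_{i,j}(0) Q_j(A ∩ {S_{j,i}(t) > 0})`. -/
def NumeraireConsistent {d : ℕ} {Ω : Type*} [mΩ : MeasurableSpace Ω] {T : ℝ}
    (M : MarketModel d Ω T) (Q : Fin d → Measure Ω) : Prop :=
  (∀ i, IsProbabilityMeasure (Q i)) ∧
  ∀ i j : Fin d, ∀ t ∈ Set.Icc (0 : ℝ) T, ∀ A : Set Ω, MeasurableSet[M.F t] A →
    ∫⁻ ω in A, M.S t ω i j ∂(Q i) = M.S0 i j * Q j (A ∩ {ω | 0 < M.S t ω j i})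

/-- A valuation measure with respect to the basket: the basket-quoted prices form a
`Q̄`-martingale on `[0, T]`. -/
def IsValuationMeasure {d : ℕ} {Ω : Type*} [mΩ : MeasurableSpace Ω] {T : ℝ}
    (M : MarketModel d Ω T) (Qb : Measure Ω) : Prop :=
  IsProbabilityMeasure Qb ∧
  ∀ i, MartingaleOn M.F Qb (fun t ω => (M.Sbar i t ω).toReal) T

/-- The aggregation valuation formula
`E^{Q̄}[C̄ | F(r)] = ∑_{j ∈ A(r)} S̄_j(r) E^{Q_j}[C_j / |A(T)| | F(r)]`. -/
def AggregationFormula {d : ℕ} {Ω : Type*} [mΩ : MeasurableSpace Ω] {T : ℝ}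
    (M : MarketModel d Ω T) (Qb : Measure Ω) (Q : Fin d → Measure Ω)
    (C : Ω → Fin d → ℝ≥0∞) (r : ℝ) : Prop :=
  Qb[fun ω => (M.Cbar C ω).toReal|M.F r] =ᵐ[Qb] fun ω =>
    ∑ j, Set.indicator {ω' | ∑ k, M.S r ω' j k < ∞}
      (fun ω' => (M.Sbar j r ω').toReal *
        ((Q j)[fun ω'' => (C ω'' j / ((M.active T ω'').card : ℝ≥0∞)).toReal|M.F r]) ω') ω

/-- An `[0,∞]`-valued process jumps to zero on `[0, T]`: it is zero at some time `t ∈ [0, T]`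
while its left limit at `t` is strictly positive. -/
def JumpsToZeroOn (X : ℝ → ℝ≥0∞) (T : ℝ) : Prop :=
  ∃ t ∈ Set.Icc (0 : ℝ) T, X t = 0 ∧ 0 < Function.leftLim X t

/-- A `[0,∞]`-valued stopping time. -/
def IsStoppingTimeE {Ω : Type*} {mΩ : MeasurableSpace Ω} (F : Filtration ℝ mΩ)
    (τ : Ω → ℝ≥0∞) : Prop :=
  ∀ t : ℝ, 0 ≤ t → MeasurableSet[F t] {ω | τ ω ≤ ENNReal.ofReal t}

/-- Membership in the σ-algebra `F(τ)` for a `[0,∞]`-valued stopping time `τ`. -/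
def MeasurableSetAtE {Ω : Type*} {mΩ : MeasurableSpace Ω} (F : Filtration ℝ mΩ)
    (τ : Ω → ℝ≥0∞) (A : Set Ω) : Prop :=
  MeasurableSet A ∧ ∀ t : ℝ, 0 ≤ t → MeasurableSet[F t] (A ∩ {ω | τ ω ≤ ENNReal.ofReal t})

/-- A predictable time: a stopping time announced by a nondecreasing sequence of stopping
times converging to it and strictly smaller than it on its finiteness set. -/
def IsPredictableTimeE {Ω : Type*} {mΩ : MeasurableSpace Ω} (F : Filtration ℝ mΩ)
    (σ : Ω → ℝ≥0∞) : Prop :=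
  IsStoppingTimeE F σ ∧
  ∃ a : ℕ → Ω → ℝ≥0∞,
    (∀ n, IsStoppingTimeE F (a n)) ∧
    (∀ n ω, a n ω ≤ a (n + 1) ω) ∧
    (∀ ω, (⨆ n, a n ω) = σ ω) ∧
    ∀ n ω, 0 < σ ω → σ ω < ∞ → a n ω < σ ω

/-- No Obvious Devaluations: for every currency `i` and stopping time `τ`,
`P(i ∈ A(T) | F(τ)) > 0` almost surely on `{τ < ∞} ∩ {i ∈ A(τ)}`, formulated via
`F(τ)`-measurable subsets of that event. -/
def NOD {d : ℕ} {Ω : Type*} [mΩ : MeasurableSpace Ω] {T : ℝ}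
    (M : MarketModel d Ω T) (P : Measure Ω) : Prop :=
  ∀ i : Fin d, ∀ τ : Ω → ℝ≥0∞, IsStoppingTimeE M.F τ →
    ∀ A : Set Ω, MeasurableSetAtE M.F τ A →
      (∀ ω ∈ A, τ ω < ∞ ∧ ∑ j, M.S (τ ω).toReal ω i j < ∞) →
      0 < P A → 0 < P (A ∩ {ω | ∑ j, M.S T ω i j < ∞})

/-! Consistency makes row `i` equal to `s i j` times row `j` as soon as both rows are finite,
so `s i j` is the ratio of the row sums, i.e. `s̄ j / s̄ i`. An infinite row `j` contains an
infinite entry `s j k`, which would make `s i k = s i j * ∞` infinite unless `s i j = 0`; hence a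
finite row `i` has `s i j = 0`, and dually `s j i = ∞` because `s j i * s i j = 1` is impossible
for finite `s j i`. These two cases are `0 = 0 / s̄ i` and `∞ = s̄ j / 0`, while two infinite rows
give the excluded `0 / 0`. -/

namespace IsExchangeMatrix

variable {d : ℕ} {s : Fin d → Fin d → ℝ≥0∞}

lemma one_le_rowSum (hs : IsExchangeMatrix s) (i : Fin d) : 1 ≤ ∑ k, s i k :=
  hs.diag i ▸ Finset.single_le_sum_of_canonicallyOrdered (Finset.mem_univ i)

lemma mul_eq_of_ne_top (hs : IsExchangeMatrix s) {i j k : Fin d} (hij : s i j ≠ ∞)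
    (hjk : s j k ≠ ∞) : s i j * s j k = s i k :=
  hs.consistent i j k ⟨fun h => hjk h.2, fun h => hij h.1⟩

lemma ne_top_of_rowSum_ne_top {i : Fin d} (hi : ∑ k, s i k ≠ ∞) (j : Fin d) : s i j ≠ ∞ :=
  ENNReal.sum_ne_top.1 hi j (Finset.mem_univ j)

lemma rowSum_eq_mul_rowSum (hs : IsExchangeMatrix s) {i j : Fin d} (hi : ∑ k, s i k ≠ ∞)
    (hj : ∑ k, s j k ≠ ∞) : ∑ k, s i k = s i j * ∑ k, s j k := by
  rw [Finset.mul_sum]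
  exact Finset.sum_congr rfl fun k _ =>
    (hs.mul_eq_of_ne_top (ne_top_of_rowSum_ne_top hi j) (ne_top_of_rowSum_ne_top hj k)).symm

lemma eq_rowSum_div_rowSum (hs : IsExchangeMatrix s) {i j : Fin d} (hi : ∑ k, s i k ≠ ∞)
    (hj : ∑ k, s j k ≠ ∞) : s i j = (∑ k, s i k) / ∑ k, s j k := by
  have hj₀ : ∑ k, s j k ≠ 0 := (zero_lt_one.trans_le (hs.one_le_rowSum j)).ne'
  rw [hs.rowSum_eq_mul_rowSum hi hj, ENNReal.mul_div_cancel_right hj₀ hj]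

lemma eq_zero_of_rowSum_eq_top (hs : IsExchangeMatrix s) {i j : Fin d} (hi : ∑ k, s i k ≠ ∞)
    (hj : ∑ k, s j k = ∞) : s i j = 0 := by
  by_contra hij
  obtain ⟨k, -, hjk⟩ := ENNReal.sum_eq_top.1 hj
  have hik : s i j * s j k = s i k :=
    hs.consistent i j k ⟨fun h => hij h.1, fun h => ne_top_of_rowSum_ne_top hi j h.1⟩
  rw [hjk, ENNReal.mul_top hij] at hik
  exact ne_top_of_rowSum_ne_top hi k hik.symm

lemma eq_top_of_rowSum_eq_top (hs : IsExchangeMatrix s) {i j : Fin d} (hi : ∑ k, s i k = ∞)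
    (hj : ∑ k, s j k ≠ ∞) : s i j = ∞ := by
  by_contra hij
  have hji := hs.eq_zero_of_rowSum_eq_top hj hi
  have hii := hs.mul_eq_of_ne_top hij (hji ▸ ENNReal.zero_ne_top)
  rw [hji, mul_zero, hs.diag] at hii
  exact zero_ne_one hii

end IsExchangeMatrix

theorem exchangeMatrix_eq_basket_ratio_general {d : ℕ}
    (s : Fin d → Fin d → ℝ≥0∞) (hs : IsExchangeMatrix s)
    (sbar : Fin d → ℝ≥0∞) (hsbar : ∀ i, sbar i = (∑ j, s i j)⁻¹) :
    ∀ i j, ¬(sbar j = 0 ∧ sbar i = 0) → ¬(sbar j = ∞ ∧ sbar i = ∞) →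
      s i j = sbar j / sbar i := by
  intro i j h00 _
  simp only [hsbar] at h00 ⊢
  by_cases hi : ∑ k, s i k = ∞ <;> by_cases hj : ∑ k, s j k = ∞
  · simp [hi, hj] at h00
  · rw [hs.eq_top_of_rowSum_eq_top hi hj, hi, ENNReal.inv_top,
      ENNReal.div_zero (ENNReal.inv_ne_zero.2 hj)]
  · rw [hs.eq_zero_of_rowSum_eq_top hi hj, hj, ENNReal.inv_top, ENNReal.zero_div]
  · rw [hs.eq_rowSum_div_rowSum hi hj, div_eq_mul_inv _ (∑ k, s i k)⁻¹, inv_inv, mul_comm,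
      div_eq_mul_inv]

/-- For an exchange matrix `s` with basket-quoted prices
`s̄ i = (∑ j, s i j)⁻¹`, whenever the fraction `s̄ j / s̄ i` is well-defined
(not `0/0` and not `∞/∞`), one has `s i j = s̄ j / s̄ i`. -/
theorem exchangeMatrix_eq_basket_ratio {d : ℕ} (hd : 0 < d)
    (s : Fin d → Fin d → ℝ≥0∞) (hs : IsExchangeMatrix s)
    (sbar : Fin d → ℝ≥0∞) (hsbar : ∀ i, sbar i = (∑ j, s i j)⁻¹) :
    ∀ i j, ¬(sbar j = 0 ∧ sbar i = 0) → ¬(sbar j = ∞ ∧ sbar i = ∞) →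
      s i j = sbar j / sbar i :=
  exchangeMatrix_eq_basket_ratio_general s hs sbar hsbar
end
end

section
/- Suppose (Q_i)_{i=1}^d is a numéraire-consistent family of probability measures. Then for all i,j and every stopping time τ with values in [0,T]: the stopped process S_{i,j}^τ is a Q_i-martingale if and only if Q_j(S_{j,i}(τ) > 0) = 1; moreover, in that case the restriction of Q_j to F(τ) is absolutely continuous with respect to the restriction of Q_i to F(τ) with density dQ_j/dQ_i|_{F(τ)} = S_{j,i}(0)·S_{i,j}(τ). In particular (taking τ = T), S_{i,j} is a true Q_i-martingale if and only if Q_j(S_{j,i}(T) > 0) = 1. -/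
open MeasureTheory Filter Set Function
open scoped ENNReal

noncomputable section

/-!
The deterministic-time identity `E^{Q_a}[S_{ab}(t) 1_A] = S_{ab}(0) Q_b(A ∩ {S_{ba}(t) > 0})`,
`A ∈ F(t)`, extends to every stopping time `σ ≤ T` and `A ∈ F(σ)`. For the dyadic approximations
`σ_m ↓ σ` it is a finite sum of deterministic-time identities. Right-continuity of `S` and Fatou's
lemma give `≤` in the limit, because a currency that has become worthless stays worthless
`Q_b`-a.s. (where `S_{ba} = 0` we have `S_{ab} = ∞`, a `Q_a`-null event). Equality of the total
masses comes from the backward supermartingale `S_{ab}(σ_m)`, which is uniformly integrable, and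
splitting `Ω = A ∪ Aᶜ` turns the two inequalities into equality on each `A ∈ F(σ)`.

If `Q_b(S_{ba}(τ) > 0) = 1`, this positivity passes to `τ ∧ u`, so on `A ∈ F(s)` both
`S_{ab}(τ ∧ s)` and `S_{ab}(τ ∧ t)` integrate over `A ∩ {τ > s}` to `S_{ab}(0) Q_b(A ∩ {τ > s})`,
while they agree on `{τ ≤ s}`: the stopped process is a martingale. Conversely a martingale has
`S_{ab}(0) = E^{Q_a}[S_{ab}(τ)] = S_{ab}(0) Q_b(S_{ba}(τ) > 0)`.
-/

open scoped Topology

/-- `hsub` is the backward supermartingale property of `f`, tested on sublevel sets of the later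
variable; it yields the uniform integrability that prevents a loss of mass in the limit. -/
theorem lintegral_le_lintegral_of_tendsto_of_setLIntegral_le {α : Type*} [MeasurableSpace α]
    {μ : Measure α} [IsFiniteMeasure μ] {f : ℕ → α → ℝ≥0∞} {g : α → ℝ≥0∞} {C : ℝ≥0∞}
    (hC : C ≠ ∞) (hf : ∀ n, Measurable (f n)) (hfC : ∀ n, ∫⁻ a, f n a ∂μ ≤ C)
    (hlim : ∀ a, Tendsto (fun n => f n a) atTop (𝓝 (g a)))
    (hsub : ∀ N n, N ≤ n → ∀ K : ℝ≥0∞,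
      ∫⁻ a in {a | f n a ≤ K}, f N a ∂μ ≤ ∫⁻ a in {a | f n a ≤ K}, f n a ∂μ)
    (N : ℕ) : ∫⁻ a, f N a ∂μ ≤ ∫⁻ a, g a ∂μ := by
  refine ENNReal.le_of_forall_pos_le_add fun ε hε _ => ?_
  obtain ⟨δ, hδ, hsmall⟩ := exists_pos_setLIntegral_lt_of_measure_lt
    (ne_top_of_le_ne_top hC (hfC N)) (ENNReal.coe_ne_zero.2 hε.ne')
  obtain ⟨K, hK⟩ := ENNReal.exists_nat_gt (ENNReal.div_ne_top hC hδ.ne')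
  have hK0 : (K : ℝ≥0∞) ≠ 0 := by
    intro h
    rw [h] at hK
    exact not_lt_zero hK
  have htail : ∀ n, μ {a | f n a ≤ K}ᶜ < δ := fun n =>
    calc μ {a | f n a ≤ K}ᶜ ≤ μ {a | (K : ℝ≥0∞) ≤ f n a} :=
          measure_mono fun a ha => (not_le.1 (notMem_ofPred_iff.1 ha)).le
      _ ≤ (∫⁻ a, f n a ∂μ) / K :=
          meas_ge_le_lintegral_div (hf n).aemeasurable hK0 (ENNReal.natCast_ne_top K)
      _ ≤ C / K := by gcongr; exact hfC n
      _ < δ := ENNReal.div_lt_of_lt_mul <|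
          (ENNReal.div_lt_iff (Or.inl hδ.ne') (Or.inr hC)).1 hK |>.trans_eq (mul_comm _ _)
  have hbound : ∀ n, N ≤ n → ∫⁻ a, f N a ∂μ ≤ ∫⁻ a, min (f n a) K ∂μ + ε := by
    intro n hn
    have hs : MeasurableSet {a | f n a ≤ K} := measurableSet_le (hf n) measurable_const
    calc ∫⁻ a, f N a ∂μ
        = ∫⁻ a in {a | f n a ≤ K}, f N a ∂μ + ∫⁻ a in {a | f n a ≤ K}ᶜ, f N a ∂μ :=
          (lintegral_add_compl _ hs).symm
      _ ≤ ∫⁻ a in {a | f n a ≤ K}, f n a ∂μ + ε :=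
          add_le_add (hsub N n hn K) (hsmall _ (htail n)).le
      _ = ∫⁻ a in {a | f n a ≤ K}, min (f n a) K ∂μ + ε := by
          rw [setLIntegral_congr_fun hs fun a ha => (min_eq_left ha).symm]
      _ ≤ ∫⁻ a, min (f n a) K ∂μ + ε := by gcongr; exact Measure.restrict_le_self
  have hdom : Tendsto (fun n => ∫⁻ a, min (f n a) K ∂μ) atTop (𝓝 (∫⁻ a, min (g a) K ∂μ)) :=
    tendsto_lintegral_of_dominated_convergence (fun _ => K)
      (fun n => (hf n).min measurable_const) (fun n => .of_forall fun a => min_le_right _ _)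
      (by simpa using ENNReal.mul_ne_top (ENNReal.natCast_ne_top K) (measure_ne_top μ univ))
      (.of_forall fun a => (hlim a).min tendsto_const_nhds)
  calc ∫⁻ a, f N a ∂μ ≤ ∫⁻ a, min (g a) K ∂μ + ε :=
        ge_of_tendsto (hdom.add tendsto_const_nhds) (eventually_atTop.2 ⟨N, hbound⟩)
    _ ≤ ∫⁻ a, g a ∂μ + ε := by gcongr; exact min_le_left _ _

section MartingaleOn

variable {Ω : Type*} {mΩ : MeasurableSpace Ω} {F : Filtration ℝ mΩ} {μ : Measure Ω} {T : ℝ}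

theorem martingaleOn_congr {X Y : ℝ → Ω → ℝ} (h : ∀ t ∈ Icc 0 T, X t = Y t) :
    MartingaleOn F μ X T ↔ MartingaleOn F μ Y T := by
  unfold MartingaleOn
  exact and_congr (forall₂_congr fun t ht => by rw [h t ht])
    (forall₂_congr fun r hr => forall₂_congr fun t ht => by rw [h t ht, h r hr])

variable [IsFiniteMeasure μ]

theorem MartingaleOn.integral_eq {X : ℝ → Ω → ℝ} (h : MartingaleOn F μ X T) {s t : ℝ}
    (hs : s ∈ Icc 0 T) (ht : t ∈ Icc 0 T) (hst : s ≤ t) : ∫ ω, X t ω ∂μ = ∫ ω, X s ω ∂μ := by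
  rw [← integral_condExp (F.le s), integral_congr_ae (h.2 s hs t ht hst)]

theorem martingaleOn_toReal_of_setLIntegral_eq {Y : ℝ → Ω → ℝ≥0∞}
    (hY : ∀ t ∈ Icc 0 T, Measurable[F t] (Y t)) (hfin : ∀ t ∈ Icc 0 T, ∫⁻ ω, Y t ω ∂μ ≠ ∞)
    (h : ∀ s ∈ Icc 0 T, ∀ t ∈ Icc 0 T, s ≤ t → ∀ A, MeasurableSet[F s] A →
      ∫⁻ ω in A, Y t ω ∂μ = ∫⁻ ω in A, Y s ω ∂μ) :
    MartingaleOn F μ (fun t ω => (Y t ω).toReal) T := by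
  have hmeas : ∀ t ∈ Icc 0 T, Measurable (Y t) := fun t ht => (hY t ht).mono (F.le t) le_rfl
  have hint : ∀ t ∈ Icc 0 T, Integrable (fun ω => (Y t ω).toReal) μ := fun t ht =>
    integrable_toReal_of_lintegral_ne_top (hmeas t ht).aemeasurable (hfin t ht)
  have hset : ∀ t ∈ Icc 0 T, ∀ A, ∫ ω in A, (Y t ω).toReal ∂μ = (∫⁻ ω in A, Y t ω ∂μ).toReal :=
    fun t ht A => integral_toReal (hmeas t ht).aemeasurable
      (ae_restrict_of_ae (ae_lt_top (hmeas t ht) (hfin t ht)))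
  refine ⟨fun t ht => ⟨(hY t ht).ennreal_toReal.stronglyMeasurable, hint t ht⟩,
    fun s hs t ht hst => (ae_eq_condExp_of_forall_setIntegral_eq (F.le s) (hint t ht)
      (fun A _ _ => (hint s hs).integrableOn) (fun A hA _ => ?_)
      (hY s hs).ennreal_toReal.stronglyMeasurable.aestronglyMeasurable).symm⟩
  rw [hset s hs, hset t ht, h s hs t ht hst A hA]

end MartingaleOn

/-- Negative numbers are rounded up to `0`, not to a negative grid point. -/
def dyadicCeil (m : ℕ) (x : ℝ) : ℝ := ⌈2 ^ m * x⌉₊ / 2 ^ m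

section DyadicCeil

variable {m : ℕ} {x t : ℝ}

lemma dyadicCeil_nonneg : 0 ≤ dyadicCeil m x := by
  unfold dyadicCeil
  positivity

lemma le_dyadicCeil : x ≤ dyadicCeil m x := by
  rw [dyadicCeil, le_div_iff₀ (by positivity), mul_comm]
  exact Nat.le_ceil _

lemma dyadicCeil_le_add (hx : 0 ≤ x) : dyadicCeil m x ≤ x + (2 ^ m)⁻¹ := by
  rw [dyadicCeil, div_le_iff₀ (by positivity), add_mul, inv_mul_cancel₀ (by positivity), mul_comm]
  exact (Nat.ceil_lt_add_one (by positivity)).le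

lemma dyadicCeil_succ_le : dyadicCeil (m + 1) x ≤ dyadicCeil m x := by
  have hceil : (⌈2 ^ (m + 1) * x⌉₊ : ℝ) ≤ 2 * ⌈2 ^ m * x⌉₊ := by
    have := Nat.le_ceil (2 ^ m * x)
    exact_mod_cast Nat.ceil_le.2 (by push_cast; rw [pow_succ]; linarith)
  rw [dyadicCeil, dyadicCeil, div_le_div_iff₀ (by positivity) (by positivity)]
  calc (⌈2 ^ (m + 1) * x⌉₊ : ℝ) * 2 ^ m ≤ 2 * ⌈2 ^ m * x⌉₊ * 2 ^ m := by gcongr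
    _ = ⌈2 ^ m * x⌉₊ * 2 ^ (m + 1) := by ring

lemma antitone_dyadicCeil : Antitone fun m => dyadicCeil m x :=
  antitone_nat_of_succ_le fun _ => dyadicCeil_succ_le

lemma tendsto_dyadicCeil (hx : 0 ≤ x) : Tendsto (fun m => dyadicCeil m x) atTop (𝓝 x) := by
  have hpow : Tendsto (fun m : ℕ => x + ((2 : ℝ) ^ m)⁻¹) atTop (𝓝 (x + 0)) :=
    tendsto_const_nhds.add <| tendsto_inv_atTop_zero.comp <|
      tendsto_pow_atTop_atTop_of_one_lt one_lt_two
  rw [add_zero] at hpow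
  exact tendsto_of_tendsto_of_tendsto_of_le_of_le tendsto_const_nhds hpow
    (fun _ => le_dyadicCeil) (fun _ => dyadicCeil_le_add hx)

lemma dyadicCeil_le_iff (ht : 0 ≤ t) : dyadicCeil m x ≤ t ↔ x ≤ ⌊2 ^ m * t⌋₊ / 2 ^ m := by
  have h2m : (0 : ℝ) < 2 ^ m := by positivity
  rw [dyadicCeil, div_le_iff₀ h2m, le_div_iff₀ h2m, mul_comm t, mul_comm x,
    ← Nat.le_floor_iff (by positivity), Nat.ceil_le]

end DyadicCeil

section StoppingTime

variable {Ω : Type*} {mΩ : MeasurableSpace Ω} {F : Filtration ℝ mΩ} {σ : Ω → ℝ}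

lemma isStoppingTime_dyadicCeil (hσ : IsStoppingTime F fun ω => (σ ω : WithTop ℝ)) (m : ℕ) :
    IsStoppingTime F fun ω => (dyadicCeil m (σ ω) : WithTop ℝ) := by
  intro t
  simp only [WithTop.coe_le_coe]
  rcases lt_or_ge t 0 with ht | ht
  · convert @MeasurableSet.empty _ (F t)
    exact eq_empty_of_forall_notMem fun ω hω => (dyadicCeil_nonneg.trans hω).not_gt ht
  · simp_rw [dyadicCeil_le_iff ht]
    have hfloor : (⌊2 ^ m * t⌋₊ : ℝ) / 2 ^ m ≤ t := by
      rw [div_le_iff₀ (by positivity), mul_comm]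
      exact Nat.floor_le (by positivity)
    exact F.mono hfloor _ (by simpa using hσ.measurableSet_le _)

lemma MeasureTheory.IsStoppingTime.min_coe (hσ : IsStoppingTime F fun ω => (σ ω : WithTop ℝ))
    (r : ℝ) : IsStoppingTime F fun ω => ((min r (σ ω) : ℝ) : WithTop ℝ) := by
  simpa only [min_comm (r : WithTop ℝ), WithTop.coe_min] using hσ.min_const r

lemma MeasureTheory.IsStoppingTime.measurableSet_of_forall_inter_le
    (hσ : IsStoppingTime F fun ω => (σ ω : WithTop ℝ)) {T : ℝ} (hσT : ∀ ω, σ ω ≤ T) {A : Set Ω}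
    (hA : ∀ t, MeasurableSet[F t] (A ∩ {ω | σ ω ≤ t})) : MeasurableSet[hσ.measurableSpace] A := by
  refine ⟨le_iSup F T _ ?_, fun t => by simpa using hA t⟩
  convert hA T using 1
  exact (inter_eq_left.2 fun ω _ => hσT ω).symm

lemma MeasureTheory.IsStoppingTime.measurableSet_sdiff_le
    (hσ : IsStoppingTime F fun ω => (σ ω : WithTop ℝ)) {A : Set Ω} {s u : ℝ}
    (hA : MeasurableSet[F s] A) (hsu : s ≤ u) :
    MeasurableSet[(hσ.min_coe u).measurableSpace] (A \ {ω | σ ω ≤ s}) := by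
  have hAs : MeasurableSet[F s] (A \ {ω | σ ω ≤ s}) :=
    hA.diff (by simpa using hσ.measurableSet_le s)
  refine ⟨le_iSup F s _ hAs, fun i => ?_⟩
  rcases lt_or_ge i s with hi | hi
  · convert @MeasurableSet.empty _ (F i)
    refine eq_empty_of_forall_notMem fun ω ⟨⟨_, hω⟩, hωi⟩ => ?_
    simp only [mem_ofPred_eq, not_le, WithTop.coe_le_coe] at hω hωi
    exact (lt_min (hi.trans_le hsu) (hi.trans hω)).not_ge hωi
  · exact (F.mono hi _ hAs).inter ((hσ.min_coe u).measurableSet_le i)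

end StoppingTime

def dyadicApprox {Ω : Type*} (r : ℝ) (σ : Ω → ℝ) (m : ℕ) (ω : Ω) : ℝ :=
  min r (dyadicCeil m (σ ω))

section DyadicApprox

variable {Ω : Type*} {mΩ : MeasurableSpace Ω} {F : Filtration ℝ mΩ} {σ : Ω → ℝ} {r : ℝ}

lemma isStoppingTime_dyadicApprox (hσ : IsStoppingTime F fun ω => (σ ω : WithTop ℝ)) (r : ℝ)
    (m : ℕ) : IsStoppingTime F fun ω => (dyadicApprox r σ m ω : WithTop ℝ) :=
  (isStoppingTime_dyadicCeil hσ m).min_coe r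

lemma antitone_dyadicApprox (ω : Ω) : Antitone fun m => dyadicApprox r σ m ω :=
  fun _ _ h => min_le_min_left r (antitone_dyadicCeil h)

variable (hσr : ∀ ω, σ ω ∈ Icc 0 r)
include hσr

lemma dyadicApprox_mem_Icc (m : ℕ) (ω : Ω) : dyadicApprox r σ m ω ∈ Icc (σ ω) r :=
  ⟨le_min (hσr ω).2 le_dyadicCeil, min_le_left _ _⟩

lemma dyadicApprox_mem_Icc_zero (m : ℕ) (ω : Ω) : dyadicApprox r σ m ω ∈ Icc 0 r :=
  ⟨(hσr ω).1.trans (dyadicApprox_mem_Icc hσr m ω).1, (dyadicApprox_mem_Icc hσr m ω).2⟩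

lemma finite_range_dyadicApprox (m : ℕ) : (range (dyadicApprox r σ m)).Finite := by
  refine ((finite_Iic ⌈2 ^ m * r⌉₊).image fun k : ℕ => min r ((k : ℝ) / 2 ^ m)).subset ?_
  rintro _ ⟨ω, rfl⟩
  exact ⟨_, Nat.ceil_mono (by gcongr; exact (hσr ω).2), rfl⟩

lemma measurableSpace_le_dyadicApprox (hσ : IsStoppingTime F fun ω => (σ ω : WithTop ℝ))
    (m : ℕ) : hσ.measurableSpace ≤ (isStoppingTime_dyadicApprox hσ r m).measurableSpace :=
  hσ.measurableSpace_mono _ fun ω => WithTop.coe_le_coe.2 (dyadicApprox_mem_Icc hσr m ω).1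

lemma tendsto_dyadicApprox (ω : Ω) :
    Tendsto (fun m => dyadicApprox r σ m ω) atTop (𝓝 (σ ω)) := by
  simpa [dyadicApprox, min_eq_right (hσr ω).2] using
    (tendsto_const_nhds (x := r)).min (tendsto_dyadicCeil (hσr ω).1)

end DyadicApprox

namespace IsExchangeMatrix

variable {d : ℕ} {s : Fin d → Fin d → ℝ≥0∞}

theorem eq_top_iff_eq_zero (hs : IsExchangeMatrix s) (i j : Fin d) :
    s i j = ∞ ↔ s j i = 0 := by
  constructor
  · intro hij
    by_contra hji
    have h := hs.consistent j i j ⟨fun h => hji h.1, fun h => by simp [hij] at h⟩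
    rw [hs.diag, hij, ENNReal.mul_top hji] at h
    exact ENNReal.top_ne_one h
  · intro hji
    by_contra hij
    have h := hs.consistent i j i ⟨fun h => by simp [hji] at h, fun h => hij h.1⟩
    rw [hs.diag, hji, mul_zero] at h
    exact zero_ne_one h

theorem mul_swap_eq_one (hs : IsExchangeMatrix s) {i j : Fin d} (hij : s i j ≠ ∞)
    (hji : s j i ≠ ∞) : s i j * s j i = 1 := by
  rw [hs.consistent i j i ⟨fun h => hji h.2, fun h => hij h.1⟩, hs.diag]

end IsExchangeMatrix

namespace MarketModel

variable {d : ℕ} {Ω : Type*} [MeasurableSpace Ω] {T : ℝ} (M : MarketModel d Ω T)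
  {σ : Ω → ℝ} {r : ℝ}

theorem S0_ne_top (a b : Fin d) : M.S0 a b ≠ ∞ :=
  ((Finset.single_le_sum (fun _ _ => zero_le) (Finset.mem_univ b)).trans_lt (M.active_S0 a)).ne

theorem isExchangeMatrix_S0 [Nonempty Ω] : IsExchangeMatrix M.S0 := by
  inhabit Ω
  simpa [M.init_S] using M.exchange_S 0 ⟨le_rfl, M.T_pos.le⟩ default

theorem S0_mul_S0_swap [Nonempty Ω] (a b : Fin d) : M.S0 a b * M.S0 b a = 1 :=
  M.isExchangeMatrix_S0.mul_swap_eq_one (M.S0_ne_top a b) (M.S0_ne_top b a)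

theorem S0_ne_zero [Nonempty Ω] (a b : Fin d) : M.S0 a b ≠ 0 :=
  left_ne_zero_of_mul_eq_one (M.S0_mul_S0_swap a b)

theorem measurable_S_comp_of_finite_range (hσ : IsStoppingTime M.F fun ω => (σ ω : WithTop ℝ))
    (hfin : (range σ).Finite) (hσr : ∀ ω, σ ω ∈ Icc 0 r) (hrT : r ≤ T) (a b : Fin d) :
    Measurable[M.F r] fun ω => M.S (σ ω) ω a b := by
  intro E hE
  have hpre : (fun ω => M.S (σ ω) ω a b) ⁻¹' E
      = ⋃ x ∈ range σ, {ω | σ ω = x} ∩ (fun ω => M.S x ω a b) ⁻¹' E := by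
    ext ω
    simp only [mem_preimage, mem_iUnion, mem_inter_iff, mem_ofPred_eq, exists_prop,
      exists_exists_eq_and, mem_range]
    exact ⟨fun h => ⟨ω, rfl, h⟩, fun ⟨_, hω, h⟩ => hω ▸ h⟩
  rw [hpre]
  refine .biUnion hfin.countable ?_
  rintro _ ⟨ω, rfl⟩
  refine M.F.mono (hσr ω).2 _ (MeasurableSet.inter ?_ ?_)
  · simpa using hσ.measurableSet_eq (σ ω)
  · exact M.adapted_S _ ⟨(hσr ω).1, (hσr ω).2.trans hrT⟩ a b hE

theorem tendsto_S_dyadicApprox (hσr : ∀ ω, σ ω ∈ Icc 0 r) (hrT : r ≤ T) (ω : Ω)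
    (a b : Fin d) :
    Tendsto (fun m => M.S (dyadicApprox r σ m ω) ω a b) atTop (𝓝 (M.S (σ ω) ω a b)) := by
  rcases ((hσr ω).2.trans hrT).lt_or_eq with hlt | heq
  · have hrc := continuousWithinAt_Ioi_iff_Ici.1 (M.rc_S ω a b (σ ω) ⟨(hσr ω).1, hlt⟩)
    exact hrc.tendsto.comp (tendsto_nhdsWithin_iff.2
      ⟨tendsto_dyadicApprox hσr ω, .of_forall fun m => (dyadicApprox_mem_Icc hσr m ω).1⟩)
  · have hconst : ∀ m, dyadicApprox r σ m ω = σ ω := fun m =>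
      ((dyadicApprox_mem_Icc hσr m ω).2.trans (hrT.trans heq.ge)).antisymm
        (dyadicApprox_mem_Icc hσr m ω).1
    simp [hconst]

theorem measurable_S_comp_of_le (hσ : IsStoppingTime M.F fun ω => (σ ω : WithTop ℝ))
    (hσr : ∀ ω, σ ω ∈ Icc 0 r) (hrT : r ≤ T) (a b : Fin d) :
    Measurable[M.F r] fun ω => M.S (σ ω) ω a b :=
  ENNReal.measurable_of_tendsto
    (fun m => M.measurable_S_comp_of_finite_range (isStoppingTime_dyadicApprox hσ r m)
      (finite_range_dyadicApprox hσr m) (dyadicApprox_mem_Icc_zero hσr m) hrT a b)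
    (tendsto_pi_nhds.2 fun ω => M.tendsto_S_dyadicApprox hσr hrT ω a b)

theorem measurable_S_comp (hσ : IsStoppingTime M.F fun ω => (σ ω : WithTop ℝ))
    (hσT : ∀ ω, σ ω ∈ Icc 0 T) (a b : Fin d) : Measurable fun ω => M.S (σ ω) ω a b :=
  (M.measurable_S_comp_of_le hσ hσT le_rfl a b).mono (M.F.le T) le_rfl

theorem measurable_S_comp_measurableSpace
    (hσ : IsStoppingTime M.F fun ω => (σ ω : WithTop ℝ)) (hσT : ∀ ω, σ ω ∈ Icc 0 T)
    (a b : Fin d) : Measurable[hσ.measurableSpace] fun ω => M.S (σ ω) ω a b := by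
  intro E hE
  refine ⟨le_iSup M.F T _ (M.measurable_S_comp_of_le hσ hσT le_rfl a b hE), fun i => ?_⟩
  simp only [WithTop.coe_le_coe]
  rcases lt_or_ge i 0 with hi | hi
  · convert @MeasurableSet.empty _ (M.F i)
    exact eq_empty_of_forall_notMem fun ω hω => (hω.2.trans_lt hi).not_ge (hσT ω).1
  · -- on `{σ ≤ i}` the time `σ` agrees with `j ∧ σ`, which is bounded by `j ≤ i`
    set j := min i T
    have hσj : ∀ ω, σ ω ≤ i ↔ σ ω ≤ j := fun ω => by simp [j, (hσT ω).2]
    have hset : (fun ω => M.S (σ ω) ω a b) ⁻¹' E ∩ {ω | σ ω ≤ i}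
        = (fun ω => M.S (min j (σ ω)) ω a b) ⁻¹' E ∩ {ω | σ ω ≤ j} := by
      ext ω
      simp only [mem_inter_iff, mem_preimage, mem_ofPred_eq, hσj]
      exact and_congr_left fun h => by rw [min_eq_right h]
    rw [hset]
    refine M.F.mono (min_le_left _ _) _
      (MeasurableSet.inter ?_ (by simpa using hσ.measurableSet_le j))
    exact M.measurable_S_comp_of_le (hσ.min_coe j)
      (fun ω => ⟨le_min (le_min hi M.T_pos.le) (hσT ω).1, min_le_left _ _⟩) (min_le_right _ _)
      a b hE

end MarketModel

/-- The identity defining `NumeraireConsistent`, at the stopping time `ρ` and for `A ∈ F(ρ)`. -/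
def NumeraireConsistentAt {d : ℕ} {Ω : Type*} [MeasurableSpace Ω] {T : ℝ}
    (M : MarketModel d Ω T) (Q : Fin d → Measure Ω) (a b : Fin d) {ρ : Ω → ℝ}
    (hρ : IsStoppingTime M.F fun ω => (ρ ω : WithTop ℝ)) : Prop :=
  ∀ A, MeasurableSet[hρ.measurableSpace] A →
    ∫⁻ ω in A, M.S (ρ ω) ω a b ∂(Q a) = M.S0 a b * Q b (A ∩ {ω | 0 < M.S (ρ ω) ω b a})

namespace NumeraireConsistent

variable {d : ℕ} {Ω : Type*} [MeasurableSpace Ω] {T : ℝ} {M : MarketModel d Ω T}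
  {Q : Fin d → Measure Ω} (hQ : NumeraireConsistent M Q) (a b : Fin d)
include hQ

section RandomTimes

variable {σ ρ : Ω → ℝ}

theorem numeraireConsistentAt_of_finite_range
    (hρ : IsStoppingTime M.F fun ω => (ρ ω : WithTop ℝ)) (hfin : (range ρ).Finite)
    (hρT : ∀ ω, ρ ω ∈ Icc 0 T) : NumeraireConsistentAt M Q a b hρ := by
  intro A hA
  set D := hfin.toFinset
  have hAx : ∀ x, MeasurableSet[M.F x] (A ∩ {ω | ρ ω = x}) := fun x => by
    simpa using (hρ.measurableSet_inter_eq_iff A x).1 (hA.inter (hρ.measurableSet_eq' x))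
  have hxT : ∀ x ∈ D, x ∈ Icc 0 T := by
    rintro _ hx
    obtain ⟨ω, rfl⟩ := hfin.mem_toFinset.1 hx
    exact hρT ω
  have hpart : ∀ B : Set Ω, B = ⋃ x ∈ D, B ∩ {ω | ρ ω = x} := fun B => by
    ext ω
    simp only [mem_iUnion, mem_inter_iff, mem_ofPred_eq, exists_prop]
    exact ⟨fun h => ⟨ρ ω, hfin.mem_toFinset.2 ⟨ω, rfl⟩, h, rfl⟩, fun ⟨_, _, h, _⟩ => h⟩
  have hdisj : ∀ B : Set Ω, (D : Set ℝ).PairwiseDisjoint fun x => B ∩ {ω | ρ ω = x} :=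
    fun B x _ y _ hxy => disjoint_left.2 fun ω hx hy => hxy (hx.2.symm.trans hy.2)
  have hB : MeasurableSet {ω | 0 < M.S (ρ ω) ω b a} :=
    (M.measurable_S_comp_of_finite_range hρ hfin hρT le_rfl b a).mono (M.F.le T) le_rfl
      measurableSet_Ioi
  calc ∫⁻ ω in A, M.S (ρ ω) ω a b ∂(Q a)
      = ∑ x ∈ D, ∫⁻ ω in A ∩ {ω | ρ ω = x}, M.S x ω a b ∂(Q a) := by
        conv_lhs => rw [hpart A]
        rw [lintegral_biUnion_finset (hdisj A) fun x _ => M.F.le x _ (hAx x)]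
        refine Finset.sum_congr rfl fun x _ => setLIntegral_congr_fun (M.F.le x _ (hAx x)) ?_
        rintro ω ⟨-, rfl⟩
        rfl
    _ = ∑ x ∈ D, M.S0 a b * Q b ((A ∩ {ω | 0 < M.S (ρ ω) ω b a}) ∩ {ω | ρ ω = x}) := by
        refine Finset.sum_congr rfl fun x hx => ?_
        rw [hQ.2 a b x (hxT x hx) _ (hAx x)]
        congr 2
        ext ω
        simp only [mem_inter_iff, mem_ofPred_eq]
        constructor
        · rintro ⟨⟨hA, rfl⟩, h⟩
          exact ⟨⟨hA, h⟩, rfl⟩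
        · rintro ⟨⟨hA, h⟩, rfl⟩
          exact ⟨⟨hA, rfl⟩, h⟩
    _ = M.S0 a b * Q b (A ∩ {ω | 0 < M.S (ρ ω) ω b a}) := by
        rw [← Finset.mul_sum, ← measure_biUnion_finset (hdisj _), ← hpart]
        exact fun x _ => (hρ.measurableSpace_le _ hA).inter hB |>.inter
          (M.F.le x _ (by simpa only [WithTop.coe_inj] using hρ.measurableSet_eq x))

theorem ae_setOf_pos_le_of_le (hσ : IsStoppingTime M.F fun ω => (σ ω : WithTop ℝ))
    (hρ : IsStoppingTime M.F fun ω => (ρ ω : WithTop ℝ)) (hσT : ∀ ω, σ ω ∈ Icc 0 T)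
    (hle : ∀ ω, σ ω ≤ ρ ω) (hfin : ∫⁻ ω, M.S (σ ω) ω a b ∂(Q a) ≠ ∞)
    (hρQ : NumeraireConsistentAt M Q a b hρ) :
    {ω | 0 < M.S (ρ ω) ω b a} ≤ᵐ[Q b] {ω | 0 < M.S (σ ω) ω b a} := by
  have := hQ.1 a
  have := nonempty_of_isProbabilityMeasure (Q a)
  set A := {ω | M.S (σ ω) ω b a = 0}
  have hA : MeasurableSet[hσ.measurableSpace] A :=
    M.measurable_S_comp_measurableSpace hσ hσT b a (measurableSet_singleton 0)
  -- where `S b a` vanishes, `S a b = ∞`, which `Q a` does not see since `S a b` is integrable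
  have hA_null : Q a A = 0 := by
    have hlt := ae_lt_top (M.measurable_S_comp hσ hσT a b) hfin
    refine measure_mono_null (fun ω (hω : M.S (σ ω) ω b a = 0) => ?_) (ae_iff.1 hlt)
    simpa [(M.exchange_S _ (hσT ω) ω).eq_top_iff_eq_zero] using hω
  have h := hρQ A (hσ.measurableSpace_mono hρ (fun ω => WithTop.coe_le_coe.2 (hle ω)) _ hA)
  rw [setLIntegral_measure_zero _ _ hA_null, eq_comm, mul_eq_zero] at h
  refine ae_le_set.2 (measure_mono_null ?_ (h.resolve_left (M.S0_ne_zero a b)))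
  rintro ω ⟨hpos, hnot⟩
  exact ⟨nonpos_iff_eq_zero.1 (not_lt.1 hnot), hpos⟩

end RandomTimes

section StoppingTime

variable {σ : Ω → ℝ} (hσ : IsStoppingTime M.F fun ω => (σ ω : WithTop ℝ))
  (hσT : ∀ ω, σ ω ∈ Icc 0 T)
include hσ hσT

theorem numeraireConsistentAt_dyadicApprox (m : ℕ) :
    NumeraireConsistentAt M Q a b (isStoppingTime_dyadicApprox hσ T m) :=
  hQ.numeraireConsistentAt_of_finite_range a b _ (finite_range_dyadicApprox hσT m)
    (dyadicApprox_mem_Icc_zero hσT m)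

theorem setLIntegral_S_comp_le_liminf {A : Set Ω} (hA : MeasurableSet[hσ.measurableSpace] A) :
    ∫⁻ ω in A, M.S (σ ω) ω a b ∂(Q a) ≤ liminf (fun m => M.S0 a b *
      Q b (A ∩ {ω | 0 < M.S (dyadicApprox T σ m ω) ω b a})) atTop :=
  calc ∫⁻ ω in A, M.S (σ ω) ω a b ∂(Q a)
      = ∫⁻ ω in A, liminf (fun m => M.S (dyadicApprox T σ m ω) ω a b) atTop ∂(Q a) :=
        lintegral_congr fun ω => (M.tendsto_S_dyadicApprox hσT le_rfl ω a b).liminf_eq.symm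
    _ ≤ liminf (fun m => ∫⁻ ω in A, M.S (dyadicApprox T σ m ω) ω a b ∂(Q a)) atTop :=
        lintegral_liminf_le fun m => M.measurable_S_comp (isStoppingTime_dyadicApprox hσ T m)
          (dyadicApprox_mem_Icc_zero hσT m) a b
    _ = _ := by
        congr 1
        funext m
        exact hQ.numeraireConsistentAt_dyadicApprox a b hσ hσT m A
          (measurableSpace_le_dyadicApprox hσT hσ m _ hA)

theorem lintegral_S_comp_le : ∫⁻ ω, M.S (σ ω) ω a b ∂(Q a) ≤ M.S0 a b := by
  have := hQ.1 b
  simpa using (hQ.setLIntegral_S_comp_le_liminf a b hσ hσT MeasurableSet.univ).trans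
    (liminf_le_of_frequently_le' (.of_forall fun m => mul_le_of_le_one_right' prob_le_one))

theorem setLIntegral_S_comp_le {A : Set Ω} (hA : MeasurableSet[hσ.measurableSpace] A) :
    ∫⁻ ω in A, M.S (σ ω) ω a b ∂(Q a) ≤ M.S0 a b * Q b (A ∩ {ω | 0 < M.S (σ ω) ω b a}) := by
  refine (hQ.setLIntegral_S_comp_le_liminf a b hσ hσT hA).trans
    (liminf_le_of_frequently_le' (.of_forall fun m => ?_))
  have habs := hQ.ae_setOf_pos_le_of_le a b hσ (isStoppingTime_dyadicApprox hσ T m) hσT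
    (fun ω => (dyadicApprox_mem_Icc hσT m ω).1)
    (ne_top_of_le_ne_top (M.S0_ne_top a b) (hQ.lintegral_S_comp_le a b hσ hσT))
    (hQ.numeraireConsistentAt_dyadicApprox a b hσ hσT m)
  exact mul_le_mul_right (measure_mono_ae ((EventuallyLE.refl _ A).inter habs)) _

theorem le_lintegral_S_comp :
    M.S0 a b * Q b {ω | 0 < M.S (σ ω) ω b a} ≤ ∫⁻ ω, M.S (σ ω) ω a b ∂(Q a) := by
  have := hQ.1 a
  have := hQ.1 b
  set f : ℕ → Ω → ℝ≥0∞ := fun m ω => M.S (dyadicApprox T σ m ω) ω a b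
  set B : ℕ → Set Ω := fun m => {ω | 0 < M.S (dyadicApprox T σ m ω) ω b a}
  have hσm := isStoppingTime_dyadicApprox hσ T
  have hNC := hQ.numeraireConsistentAt_dyadicApprox a b hσ hσT
  have hf_int : ∀ m, ∫⁻ ω, f m ω ∂(Q a) = M.S0 a b * Q b (B m) := fun m => by
    simpa using hNC m univ MeasurableSet.univ
  have hfC : ∀ m, ∫⁻ ω, f m ω ∂(Q a) ≤ M.S0 a b := fun m =>
    (hf_int m).trans_le (mul_le_of_le_one_right' prob_le_one)
  have hsub : ∀ N n, N ≤ n → ∀ K : ℝ≥0∞, ∫⁻ ω in {ω | f n ω ≤ K}, f N ω ∂(Q a)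
      ≤ ∫⁻ ω in {ω | f n ω ≤ K}, f n ω ∂(Q a) := by
    intro N n hNn K
    have hs : MeasurableSet[(hσm n).measurableSpace] {ω | f n ω ≤ K} :=
      M.measurable_S_comp_measurableSpace (hσm n) (dyadicApprox_mem_Icc_zero hσT n) a b
        measurableSet_Iic
    have hle : ∀ ω, dyadicApprox T σ n ω ≤ dyadicApprox T σ N ω :=
      fun ω => antitone_dyadicApprox ω hNn
    rw [hNC N _ ((hσm n).measurableSpace_mono (hσm N) (fun ω => WithTop.coe_le_coe.2 (hle ω))
      _ hs), hNC n _ hs]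
    have habs := hQ.ae_setOf_pos_le_of_le a b (hσm n) (hσm N) (dyadicApprox_mem_Icc_zero hσT n)
      hle (ne_top_of_le_ne_top (M.S0_ne_top a b) (hfC n)) (hNC N)
    exact mul_le_mul_right (measure_mono_ae ((EventuallyLE.refl _ _).inter habs)) _
  have hlim : ∀ N, ∫⁻ ω, f N ω ∂(Q a) ≤ ∫⁻ ω, M.S (σ ω) ω a b ∂(Q a) :=
    lintegral_le_lintegral_of_tendsto_of_setLIntegral_le (M.S0_ne_top a b)
      (fun m => M.measurable_S_comp (hσm m) (dyadicApprox_mem_Icc_zero hσT m) a b) hfC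
      (fun ω => M.tendsto_S_dyadicApprox hσT le_rfl ω a b) hsub
  -- by right-continuity, positivity at `σ` is eventually positivity at the approximations
  have hev : {ω | 0 < M.S (σ ω) ω b a} ⊆ ⋃ n, ⋂ m ≥ n, B m := fun ω hω => by
    obtain ⟨n, hn⟩ := eventually_atTop.1
      ((M.tendsto_S_dyadicApprox hσT le_rfl ω b a).eventually_const_lt hω)
    exact mem_iUnion.2 ⟨n, mem_iInter₂.2 hn⟩
  have hmono : Monotone fun n => ⋂ m ≥ n, B m :=
    fun n n' h => iInter₂_mono' fun m hm => ⟨m, h.trans hm, subset_rfl⟩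
  calc M.S0 a b * Q b {ω | 0 < M.S (σ ω) ω b a} ≤ M.S0 a b * ⨆ n, Q b (B n) := by
        gcongr
        exact (measure_mono hev).trans (hmono.measure_iUnion.le.trans
          (iSup_mono fun n => measure_mono (iInter₂_subset n le_rfl)))
    _ = ⨆ n, ∫⁻ ω, f n ω ∂(Q a) := by simp_rw [hf_int, ENNReal.mul_iSup]
    _ ≤ ∫⁻ ω, M.S (σ ω) ω a b ∂(Q a) := iSup_le hlim

theorem numeraireConsistentAt : NumeraireConsistentAt M Q a b hσ := by
  have := hQ.1 b
  intro A hA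
  have hAm := hσ.measurableSpace_le _ hA
  set B := {ω | 0 < M.S (σ ω) ω b a}
  refine (hQ.setLIntegral_S_comp_le a b hσ hσT hA).antisymm ?_
  -- the upper bounds on `A` and on `Aᶜ` add up to the lower bound on the total mass
  refine ENNReal.le_of_add_le_add_right
    (ENNReal.mul_ne_top (M.S0_ne_top a b) (measure_ne_top (Q b) (Aᶜ ∩ B))) ?_
  calc M.S0 a b * Q b (A ∩ B) + M.S0 a b * Q b (Aᶜ ∩ B) = M.S0 a b * Q b B := by
        rw [← mul_add, inter_comm A, ← sdiff_eq_compl_inter, measure_inter_add_sdiff _ hAm]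
    _ ≤ ∫⁻ ω, M.S (σ ω) ω a b ∂(Q a) := hQ.le_lintegral_S_comp a b hσ hσT
    _ = ∫⁻ ω in A, M.S (σ ω) ω a b ∂(Q a) + ∫⁻ ω in Aᶜ, M.S (σ ω) ω a b ∂(Q a) :=
        (lintegral_add_compl _ hAm).symm
    _ ≤ ∫⁻ ω in A, M.S (σ ω) ω a b ∂(Q a) + M.S0 a b * Q b (Aᶜ ∩ B) :=
        add_le_add le_rfl (hQ.setLIntegral_S_comp_le a b hσ hσT hA.compl)

theorem lintegral_S_comp_eq :
    ∫⁻ ω, M.S (σ ω) ω a b ∂(Q a) = M.S0 a b * Q b {ω | 0 < M.S (σ ω) ω b a} := by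
  simpa using hQ.numeraireConsistentAt a b hσ hσT univ MeasurableSet.univ

theorem measure_setOf_pos_eq_one_of_le {ρ : Ω → ℝ}
    (hρ : IsStoppingTime M.F fun ω => (ρ ω : WithTop ℝ)) (hρT : ∀ ω, ρ ω ∈ Icc 0 T)
    (hle : ∀ ω, ρ ω ≤ σ ω) (hpos : Q b {ω | 0 < M.S (σ ω) ω b a} = 1) :
    Q b {ω | 0 < M.S (ρ ω) ω b a} = 1 := by
  have := hQ.1 b
  have habs := hQ.ae_setOf_pos_le_of_le a b hρ hσ hρT hle
    (ne_top_of_le_ne_top (M.S0_ne_top a b) (hQ.lintegral_S_comp_le a b hρ hρT))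
    (hQ.numeraireConsistentAt a b hσ hσT)
  exact prob_le_one.antisymm (hpos.symm.le.trans (measure_mono_ae habs))

theorem setLIntegral_eq_of_pos (hpos : Q b {ω | 0 < M.S (σ ω) ω b a} = 1) {A : Set Ω}
    (hA : MeasurableSet[hσ.measurableSpace] A) :
    ∫⁻ ω in A, M.S (σ ω) ω a b ∂(Q a) = M.S0 a b * Q b A := by
  have := hQ.1 b
  have hB : Q b {ω | 0 < M.S (σ ω) ω b a}ᶜ = 0 :=
    (prob_compl_eq_zero_iff ((M.measurable_S_comp hσ hσT b a) measurableSet_Ioi)).2 hpos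
  rw [hQ.numeraireConsistentAt a b hσ hσT A hA, measure_inter_conull hB]

theorem measure_eq_setLIntegral (hpos : Q b {ω | 0 < M.S (σ ω) ω b a} = 1) {A : Set Ω}
    (hA : MeasurableSet[hσ.measurableSpace] A) :
    Q b A = ∫⁻ ω in A, M.S0 b a * M.S (σ ω) ω a b ∂(Q a) := by
  have := hQ.1 b
  have := nonempty_of_isProbabilityMeasure (Q b)
  rw [lintegral_const_mul _ (M.measurable_S_comp hσ hσT a b),
    hQ.setLIntegral_eq_of_pos a b hσ hσT hpos hA, ← mul_assoc, M.S0_mul_S0_swap, one_mul]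

theorem measure_setOf_pos_eq_one_of_martingaleOn
    (h : MartingaleOn M.F (Q a) (fun t ω => (M.S (min t (σ ω)) ω a b).toReal) T) :
    Q b {ω | 0 < M.S (σ ω) ω b a} = 1 := by
  have := hQ.1 a
  have := nonempty_of_isProbabilityMeasure (Q a)
  have hint := h.integral_eq ⟨le_rfl, M.T_pos.le⟩ ⟨M.T_pos.le, le_rfl⟩ M.T_pos.le
  simp only [fun ω => min_eq_right (hσT ω).2, fun ω => min_eq_left (hσT ω).1, M.init_S,
    integral_const, probReal_univ, one_smul] at hint
  have hfin : ∫⁻ ω, M.S (σ ω) ω a b ∂(Q a) ≠ ∞ :=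
    ne_top_of_le_ne_top (M.S0_ne_top a b) (hQ.lintegral_S_comp_le a b hσ hσT)
  rw [integral_toReal (M.measurable_S_comp hσ hσT a b).aemeasurable
      (ae_lt_top (M.measurable_S_comp hσ hσT a b) hfin),
    ENNReal.toReal_eq_toReal_iff' hfin (M.S0_ne_top a b),
    hQ.lintegral_S_comp_eq a b hσ hσT] at hint
  exact (ENNReal.mul_eq_left (M.S0_ne_zero a b) (M.S0_ne_top a b)).1 hint

theorem martingaleOn_stopped_of_pos (hpos : Q b {ω | 0 < M.S (σ ω) ω b a} = 1) :
    MartingaleOn M.F (Q a) (fun t ω => (M.S (min t (σ ω)) ω a b).toReal) T := by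
  have := hQ.1 a
  have hσt : ∀ t ∈ Icc 0 T, ∀ ω, min t (σ ω) ∈ Icc 0 t :=
    fun t ht ω => ⟨le_min ht.1 (hσT ω).1, min_le_left _ _⟩
  have hσtT : ∀ t ∈ Icc 0 T, ∀ ω, min t (σ ω) ∈ Icc 0 T :=
    fun t ht ω => ⟨(hσt t ht ω).1, (hσt t ht ω).2.trans ht.2⟩
  -- after time `s`, the process stopped at `u ∧ σ` integrates like the measure `S0 a b • Q b`
  have hlate : ∀ {s u}, s ∈ Icc 0 T → u ∈ Icc 0 T → s ≤ u → ∀ {A}, MeasurableSet[M.F s] A →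
      ∫⁻ ω in A \ {ω | σ ω ≤ s}, M.S (min u (σ ω)) ω a b ∂(Q a)
        = M.S0 a b * Q b (A \ {ω | σ ω ≤ s}) := fun _ hu hsu _ hA =>
    hQ.setLIntegral_eq_of_pos a b (hσ.min_coe _) (hσtT _ hu)
      (hQ.measure_setOf_pos_eq_one_of_le a b hσ hσT (hσ.min_coe _) (hσtT _ hu)
        (fun ω => min_le_right _ _) hpos)
      (hσ.measurableSet_sdiff_le hA hsu)
  refine martingaleOn_toReal_of_setLIntegral_eq
    (fun t ht => M.measurable_S_comp_of_le (hσ.min_coe t) (hσt t ht) ht.2 a b)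
    (fun t ht => ne_top_of_le_ne_top (M.S0_ne_top a b)
      (hQ.lintegral_S_comp_le a b (hσ.min_coe t) (hσtT t ht)))
    fun s hs t ht hst A hA => ?_
  have hσs : MeasurableSet {ω | σ ω ≤ s} := M.F.le s _ (by simpa using hσ.measurableSet_le s)
  rw [← lintegral_inter_add_sdiff _ A hσs, ← lintegral_inter_add_sdiff _ A hσs,
    hlate hs ht hst hA, hlate hs hs le_rfl hA]
  congr 1
  refine setLIntegral_congr_fun ((M.F.le s _ hA).inter hσs) fun ω hω => ?_
  rw [min_eq_right (hω.2.trans hst), min_eq_right hω.2]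

theorem martingaleOn_stopped_iff :
    MartingaleOn M.F (Q a) (fun t ω => (M.S (min t (σ ω)) ω a b).toReal) T ↔
      Q b {ω | 0 < M.S (σ ω) ω b a} = 1 :=
  ⟨hQ.measure_setOf_pos_eq_one_of_martingaleOn a b hσ hσT,
    hQ.martingaleOn_stopped_of_pos a b hσ hσT⟩

end StoppingTime

end NumeraireConsistent

theorem numeraireConsistent_stopped_martingale_iff_general {d : ℕ} {Ω : Type*} [MeasurableSpace Ω]
    {T : ℝ} (M : MarketModel d Ω T) (Q : Fin d → Measure Ω)
    (hQ : NumeraireConsistent M Q) (i j : Fin d)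
    (τ : Ω → ℝ) (hτ : IsStoppingTime M.F (fun ω => (τ ω : WithTop ℝ))) (hτT : ∀ ω, τ ω ∈ Set.Icc (0 : ℝ) T) :
    (MartingaleOn M.F (Q i) (fun t ω => (M.S (min t (τ ω)) ω i j).toReal) T ↔
      Q j {ω | 0 < M.S (τ ω) ω j i} = 1) ∧
    (Q j {ω | 0 < M.S (τ ω) ω j i} = 1 →
      ∀ A : Set Ω, (∀ t : ℝ, MeasurableSet[M.F t] (A ∩ {ω | τ ω ≤ t})) →
        Q j A = ∫⁻ ω in A, M.S0 j i * M.S (τ ω) ω i j ∂(Q i)) ∧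
    (MartingaleOn M.F (Q i) (fun t ω => (M.S t ω i j).toReal) T ↔
      Q j {ω | 0 < M.S T ω j i} = 1) := by
  refine ⟨hQ.martingaleOn_stopped_iff i j hτ hτT, fun hpos A hA =>
    hQ.measure_eq_setLIntegral i j hτ hτT hpos
      (hτ.measurableSet_of_forall_inter_le (fun ω => (hτT ω).2) hA), ?_⟩
  refine (martingaleOn_congr fun t ht => ?_).trans
    (hQ.martingaleOn_stopped_iff i j (isStoppingTime_const M.F T) fun _ => ⟨M.T_pos.le, le_rfl⟩)
  simp only [min_eq_left ht.2]

/-- Proposition, part (c): for a numéraire-consistent family `(Q_i)` and a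
stopping time `τ` with values in `[0, T]`: `S_{i,j}^τ` is a `Q_i`-martingale iff
`Q_j(S_{j,i}(τ) > 0) = 1`; in that case `dQ_j/dQ_i|_{F(τ)} = S_{j,i}(0) S_{i,j}(τ)`;
and (with `τ = T`) `S_{i,j}` is a true `Q_i`-martingale iff `Q_j(S_{j,i}(T) > 0) = 1`. -/
theorem numeraireConsistent_stopped_martingale_iff {d : ℕ} {Ω : Type*} [MeasurableSpace Ω]
    {T : ℝ} (hd : 0 < d) (M : MarketModel d Ω T) (Q : Fin d → Measure Ω)
    (hQ : NumeraireConsistent M Q) (i j : Fin d)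
    (τ : Ω → ℝ) (hτ : IsStoppingTime M.F (fun ω => (τ ω : WithTop ℝ))) (hτT : ∀ ω, τ ω ∈ Set.Icc (0 : ℝ) T) :
    (MartingaleOn M.F (Q i) (fun t ω => (M.S (min t (τ ω)) ω i j).toReal) T ↔
      Q j {ω | 0 < M.S (τ ω) ω j i} = 1) ∧
    (Q j {ω | 0 < M.S (τ ω) ω j i} = 1 →
      ∀ A : Set Ω, (∀ t : ℝ, MeasurableSet[M.F t] (A ∩ {ω | τ ω ≤ t})) →
        Q j A = ∫⁻ ω in A, M.S0 j i * M.S (τ ω) ω i j ∂(Q i)) ∧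
    (MartingaleOn M.F (Q i) (fun t ω => (M.S t ω i j).toReal) T ↔
      Q j {ω | 0 < M.S T ω j i} = 1) :=
  numeraireConsistent_stopped_martingale_iff_general M Q hQ i j τ hτ hτT
end
end

section
/- Suppose (Q_i)_{i=1}^d is a numéraire-consistent family of probability measures. Fix i and set w_{i,j} = S_{i,j}(0)/∑_k S_{i,k}(0) ∈ (0,1) for each j. Then ∑_j w_{i,j} = 1 and 1 − (∑_k S_{i,k}(0))^{−1}·E^{Q_i}[∑_j S_{i,j}(T)] = ∑_j w_{i,j}·Q_j(S_{j,i}(T) = 0); that is, the normalized expected decrease of the total value of all currencies measured in the i-th currency equals the weighted sum of the probabilities that the i-th currency completely devalues. -/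
open MeasureTheory Filter Set Function
open scoped ENNReal

noncomputable section

open scoped ENNReal

namespace ENNReal

theorem sum_div_sum_self {ι : Type*} (s : Finset ι) (a : ι → ℝ≥0∞)
    (h0 : ∑ k ∈ s, a k ≠ 0) (htop : ∑ k ∈ s, a k ≠ ∞) :
    ∑ j ∈ s, a j / ∑ k ∈ s, a k = 1 := by
  simp only [div_eq_mul_inv, ← Finset.sum_mul]
  exact ENNReal.mul_inv_cancel h0 htop

theorem one_sub_sum_mul {ι : Type*} (s : Finset ι) (w p : ι → ℝ≥0∞)
    (hw : ∑ j ∈ s, w j = 1) (hp : ∀ j ∈ s, p j ≤ 1) :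
    1 - ∑ j ∈ s, w j * p j = ∑ j ∈ s, w j * (1 - p j) := by
  have hle : ∑ j ∈ s, w j * p j ≤ 1 :=
    hw ▸ Finset.sum_le_sum fun j hj => mul_le_of_le_one_right' (hp j hj)
  refine ENNReal.sub_eq_of_eq_add (ne_top_of_le_ne_top one_ne_top hle) ?_
  calc (1 : ℝ≥0∞) = ∑ j ∈ s, w j := hw.symm
    _ = ∑ j ∈ s, (w j * (1 - p j) + w j * p j) := Finset.sum_congr rfl fun j hj => by
      rw [← mul_add, tsub_add_cancel_of_le (hp j hj), mul_one]
    _ = _ := Finset.sum_add_distrib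

end ENNReal

namespace MarketModel

variable {d : ℕ} {Ω : Type*} [MeasurableSpace Ω] {T : ℝ} (M : MarketModel d Ω T)

theorem measurable_S {t : ℝ} (ht : t ∈ Icc 0 T) (i j : Fin d) :
    Measurable fun ω => M.S t ω i j :=
  (M.adapted_S t ht i j).mono (M.F.le t) le_rfl

theorem S0_diag [Nonempty Ω] (i : Fin d) : M.S0 i i = 1 := by
  obtain ⟨ω⟩ := ‹Nonempty Ω›
  rw [← M.init_S ω]
  exact (M.exchange_S 0 ⟨le_rfl, M.T_pos.le⟩ ω).diag i

theorem one_le_sum_S0 [Nonempty Ω] (i : Fin d) : 1 ≤ ∑ k, M.S0 i k :=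
  M.S0_diag i ▸ Finset.single_le_sum (fun _ _ => zero_le) (Finset.mem_univ i)

end MarketModel

namespace NumeraireConsistent

variable {d : ℕ} {Ω : Type*} [MeasurableSpace Ω] {T : ℝ} {M : MarketModel d Ω T}
  {Q : Fin d → Measure Ω}

theorem lintegral_S (hQ : NumeraireConsistent M Q) {t : ℝ} (ht : t ∈ Icc 0 T) (i j : Fin d) :
    ∫⁻ ω, M.S t ω i j ∂(Q i) = M.S0 i j * Q j {ω | 0 < M.S t ω j i} := by
  simpa using hQ.2 i j t ht univ MeasurableSet.univ

theorem lintegral_sum_S (hQ : NumeraireConsistent M Q) {t : ℝ} (ht : t ∈ Icc 0 T)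
    (i : Fin d) :
    ∫⁻ ω, ∑ j, M.S t ω i j ∂(Q i) = ∑ j, M.S0 i j * Q j {ω | 0 < M.S t ω j i} := by
  rw [lintegral_finsetSum _ fun j _ => M.measurable_S ht i j]
  exact Finset.sum_congr rfl fun j _ => hQ.lintegral_S ht i j

theorem measure_S_eq_zero (hQ : NumeraireConsistent M Q) {t : ℝ} (ht : t ∈ Icc 0 T)
    (i j : Fin d) :
    Q j {ω | M.S t ω j i = 0} = 1 - Q j {ω | 0 < M.S t ω j i} := by
  have := hQ.1 j
  have hcompl : {ω | M.S t ω j i = 0} = {ω | 0 < M.S t ω j i}ᶜ := by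
    ext ω; simp [pos_iff_ne_zero]
  rw [hcompl, prob_compl_eq_one_sub (measurableSet_lt measurable_const (M.measurable_S ht j i))]

end NumeraireConsistent

theorem numeraireConsistent_expected_devaluation_general {d : ℕ} {Ω : Type*} [MeasurableSpace Ω]
    {T : ℝ} (M : MarketModel d Ω T) (Q : Fin d → Measure Ω)
    (hQ : NumeraireConsistent M Q) (i : Fin d)
    (w : Fin d → ℝ≥0∞) (hw : ∀ j, w j = M.S0 i j / ∑ k, M.S0 i k) :
    (∑ j, w j) = 1 ∧
    1 - (∑ k, M.S0 i k)⁻¹ * ∫⁻ ω, ∑ j, M.S T ω i j ∂(Q i)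
      = ∑ j, w j * Q j {ω | M.S T ω j i = 0} := by
  have := hQ.1 i
  have : Nonempty Ω := nonempty_of_isProbabilityMeasure (Q i)
  have hT : T ∈ Icc 0 T := ⟨M.T_pos.le, le_rfl⟩
  have hsum_w : ∑ j, w j = 1 := by
    simp only [hw]
    exact ENNReal.sum_div_sum_self _ _
      (one_pos.trans_le (M.one_le_sum_S0 i)).ne' (M.active_S0 i).ne
  refine ⟨hsum_w, ?_⟩
  have hweighted : (∑ k, M.S0 i k)⁻¹ * ∫⁻ ω, ∑ j, M.S T ω i j ∂(Q i)
      = ∑ j, w j * Q j {ω | 0 < M.S T ω j i} := by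
    rw [hQ.lintegral_sum_S hT, Finset.mul_sum]
    refine Finset.sum_congr rfl fun j _ => ?_
    rw [hw, div_eq_mul_inv]
    ring
  have hprob_le_one : ∀ j ∈ Finset.univ, Q j {ω | 0 < M.S T ω j i} ≤ 1 := fun j _ => by
    have := hQ.1 j
    exact prob_le_one
  rw [hweighted, ENNReal.one_sub_sum_mul _ _ _ hsum_w hprob_le_one]
  simp only [hQ.measure_S_eq_zero hT]

/-- interpretation of numéraire-consistency: with weights
`w j = S_{i,j}(0) / ∑_k S_{i,k}(0)`, one has `∑ j, w j = 1` and the normalized expected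
decrease of the total value of all currencies in units of the `i`-th currency equals the
weighted sum of the probabilities that the `i`-th currency completely devalues. -/
theorem numeraireConsistent_expected_devaluation {d : ℕ} {Ω : Type*} [MeasurableSpace Ω]
    {T : ℝ} (hd : 0 < d) (M : MarketModel d Ω T) (Q : Fin d → Measure Ω)
    (hQ : NumeraireConsistent M Q) (i : Fin d)
    (w : Fin d → ℝ≥0∞) (hw : ∀ j, w j = M.S0 i j / ∑ k, M.S0 i k) :
    (∑ j, w j) = 1 ∧
    1 - (∑ k, M.S0 i k)⁻¹ * ∫⁻ ω, ∑ j, M.S T ω i j ∂(Q i)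
      = ∑ j, w j * Q j {ω | M.S T ω j i = 0} :=
  numeraireConsistent_expected_devaluation_general M Q hQ i w hw
end
end
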